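/- arXiv:2512.04679 — 2 statements merged into one kernel-verified Lean document; each statement's English description precedes it below -/
import Mathlib

section
/- Let λ, μ, s, c > 0 and 0 < q < 1 with qμ/(1−q) > λ. Then the receiver's utility J_R(s,c) = (qμc(μ+s) + (1−q)λs(λ+c))/((μ+λ)(μc+λs+cs)) satisfies J_R(s,c) ≥ qμ/(μ+λ) if and only if c ≥ qμ/(1−q) − λ. -/
/-! The gain of following the sender over always guessing state `0` factors as
`λ s ((1 - q)(λ + c) - q μ) / ((μ + λ)(μ c + λ s + c s))`, so its sign is the sign of
`(1 - q)(λ + c) - q μ`. -/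

lemma receiver_utility_sub_default {K : Type*} [Field K] {lam mu s c q : K}
    (hD : mu * c + lam * s + c * s ≠ 0) :
    (q * mu * c * (mu + s) + (1 - q) * lam * s * (lam + c)) /
        ((mu + lam) * (mu * c + lam * s + c * s)) - q * mu / (mu + lam) =
      lam * s * ((1 - q) * (lam + c) - q * mu) /
        ((mu + lam) * (mu * c + lam * s + c * s)) := by
  rw [← mul_div_mul_right (q * mu) _ hD, div_sub_div_same]
  ring

lemma div_sub_le_iff_le_mul_add {K : Type*} [Field K] [LinearOrder K] [IsStrictOrderedRing K]
    {a b c x : K} (hb : 0 < b) :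
    a / b - c ≤ x ↔ a ≤ b * (c + x) := by
  rw [sub_le_iff_le_add', div_le_iff₀' hb]

theorem stmt_7_general (lam mu s c q : ℝ) (hlam : 0 < lam) (hmu : 0 < mu)
    (hs : 0 < s) (hc : 0 < c) (hq1 : q < 1) :
    (q * mu * c * (mu + s) + (1 - q) * lam * s * (lam + c)) /
      ((mu + lam) * (mu * c + lam * s + c * s)) ≥ q * mu / (mu + lam) ↔
    c ≥ q * mu / (1 - q) - lam := by
  have hD : 0 < (mu + lam) * (mu * c + lam * s + c * s) := by positivity
  rw [ge_iff_le, ← sub_nonneg, receiver_utility_sub_default (by positivity),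
    le_div_iff₀ hD, zero_mul, mul_nonneg_iff_of_pos_left (by positivity), sub_nonneg,
    ge_iff_le, div_sub_le_iff_le_mul_add (by linarith)]

theorem stmt_7 (lam mu s c q : ℝ) (hlam : 0 < lam) (hmu : 0 < mu)
    (hs : 0 < s) (hc : 0 < c) (hq0 : 0 < q) (hq1 : q < 1)
    (hIC : q * mu / (1 - q) > lam) :
    (q * mu * c * (mu + s) + (1 - q) * lam * s * (lam + c)) /
      ((mu + lam) * (mu * c + lam * s + c * s)) ≥ q * mu / (mu + lam) ↔
    c ≥ q * mu / (1 - q) - lam :=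
  stmt_7_general lam mu s c q hlam hmu hs hc hq1
end

section
/- Let λ, μ > 0, 0 < q < 1 with c_min = qμ/(1−q) − λ > 0, and R > c_min. Then among all pairs (s,c) with s ≥ 0, c ≥ c_min, and s + c ≤ R, the sender's utility J_S(s,c) = λs(c+λ+μ)/((μ+λ)(μc+λs+cs)) is uniquely maximized at s = R − c_min, c = c_min. -/
/-!
Both partial effects of the utility have a closed form whose sign is evident: for fixed `s > 0`
it is strictly decreasing in `c`, and for fixed `c > 0` strictly increasing in `s`. Hence the
cost is pushed down to `c_min` and the remaining budget is spent on sampling, `s = R - c_min`;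
a feasible point with `s = 0` has utility `0`, below the positive value at that corner.
-/

open Set

noncomputable section

namespace Stackelberg

def senderUtility (lam mu s c : ℝ) : ℝ :=
  lam * s * (c + lam + mu) / ((mu + lam) * (mu * c + lam * s + c * s))

variable {lam mu : ℝ}

lemma denom_pos (hlam : 0 < lam) (hmu : 0 < mu) {s c : ℝ} (hs : 0 ≤ s) (hc : 0 < c) :
    0 < mu * c + lam * s + c * s := by
  positivity

lemma senderUtility_zero_left (c : ℝ) : senderUtility lam mu 0 c = 0 := by
  simp [senderUtility]

lemma senderUtility_pos (hlam : 0 < lam) (hmu : 0 < mu) {s c : ℝ} (hs : 0 < s) (hc : 0 < c) :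
    0 < senderUtility lam mu s c := by
  unfold senderUtility
  positivity

lemma senderUtility_sub_of_cost (hlam : 0 < lam) (hmu : 0 < mu) {s : ℝ} (hs : 0 ≤ s)
    {c c' : ℝ} (hc : 0 < c) (hc' : 0 < c') :
    senderUtility lam mu s c - senderUtility lam mu s c' =
      lam * mu * s * (lam + mu + s) * (c' - c) /
        ((mu + lam) * (mu * c + lam * s + c * s) * (mu * c' + lam * s + c' * s)) := by
  have := denom_pos hlam hmu hs hc
  have := denom_pos hlam hmu hs hc'
  unfold senderUtility
  field_simp
  ring

lemma senderUtility_sub_of_sampling (hlam : 0 < lam) (hmu : 0 < mu) {c : ℝ} (hc : 0 < c)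
    {s s' : ℝ} (hs : 0 ≤ s) (hs' : 0 ≤ s') :
    senderUtility lam mu s' c - senderUtility lam mu s c =
      lam * mu * c * (c + lam + mu) * (s' - s) /
        ((mu + lam) * (mu * c + lam * s + c * s) * (mu * c + lam * s' + c * s')) := by
  have := denom_pos hlam hmu hs hc
  have := denom_pos hlam hmu hs' hc
  unfold senderUtility
  field_simp
  ring

lemma senderUtility_antitoneOn_cost (hlam : 0 < lam) (hmu : 0 < mu) {s : ℝ} (hs : 0 ≤ s) :
    AntitoneOn (senderUtility lam mu s) (Ioi 0) := by
  intro c hc c' hc' hcc'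
  have := denom_pos hlam hmu hs hc
  have := denom_pos hlam hmu hs hc'
  have hcc'' : 0 ≤ c' - c := sub_nonneg.2 hcc'
  rw [← sub_nonneg, senderUtility_sub_of_cost hlam hmu hs hc hc']
  positivity

lemma senderUtility_strictAntiOn_cost (hlam : 0 < lam) (hmu : 0 < mu) {s : ℝ} (hs : 0 < s) :
    StrictAntiOn (senderUtility lam mu s) (Ioi 0) := by
  intro c hc c' hc' hcc'
  have := denom_pos hlam hmu hs.le hc
  have := denom_pos hlam hmu hs.le hc'
  have hcc'' : 0 < c' - c := sub_pos.2 hcc'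
  rw [← sub_pos, senderUtility_sub_of_cost hlam hmu hs.le hc hc']
  positivity

lemma senderUtility_strictMonoOn_sampling (hlam : 0 < lam) (hmu : 0 < mu) {c : ℝ}
    (hc : 0 < c) : StrictMonoOn (fun s ↦ senderUtility lam mu s c) (Ici 0) := by
  intro s hs s' hs' hss'
  have := denom_pos hlam hmu hs hc
  have := denom_pos hlam hmu hs' hc
  have hss'' : 0 < s' - s := sub_pos.2 hss'
  rw [← sub_pos, senderUtility_sub_of_sampling hlam hmu hc hs hs']
  positivity

theorem senderUtility_isMax_corner (hlam : 0 < lam) (hmu : 0 < mu) {c₀ R : ℝ} (hc₀ : 0 < c₀)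
    (hR : c₀ < R) {s c : ℝ} (hs : 0 ≤ s) (hc : c₀ ≤ c) (hsc : s + c ≤ R) :
    senderUtility lam mu s c ≤ senderUtility lam mu (R - c₀) c₀ ∧
      (senderUtility lam mu s c = senderUtility lam mu (R - c₀) c₀ →
        s = R - c₀ ∧ c = c₀) := by
  have hc₀' : c₀ ∈ Ioi (0 : ℝ) := hc₀
  have hcpos : c ∈ Ioi (0 : ℝ) := hc₀.trans_le hc
  have hs' : s ∈ Ici (0 : ℝ) := hs
  have hcorner : R - c₀ ∈ Ici (0 : ℝ) := (sub_pos.2 hR).le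
  have hsR : s ≤ R - c₀ := by linarith
  have hmono := senderUtility_strictMonoOn_sampling hlam hmu hc₀
  have hcost : senderUtility lam mu s c ≤ senderUtility lam mu s c₀ :=
    senderUtility_antitoneOn_cost hlam hmu hs hc₀' hcpos hc
  have hsampling : senderUtility lam mu s c₀ ≤ senderUtility lam mu (R - c₀) c₀ :=
    hmono.monotoneOn hs' hcorner hsR
  refine ⟨hcost.trans hsampling, fun heq ↦ ?_⟩
  rcases hs.eq_or_lt with rfl | hspos
  · have := senderUtility_pos hlam hmu (sub_pos.2 hR) hc₀
    rw [senderUtility_zero_left] at heq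
    exact absurd heq this.ne
  have hc_eq : c = c₀ := by
    by_contra hne
    have := senderUtility_strictAntiOn_cost hlam hmu hspos hc₀' hcpos (hc.lt_of_ne' hne)
    linarith
  have hs_eq : s = R - c₀ := by
    by_contra hne
    have : senderUtility lam mu s c₀ < senderUtility lam mu (R - c₀) c₀ :=
      hmono hs' hcorner (hsR.lt_of_ne hne)
    linarith
  exact ⟨hs_eq, hc_eq⟩

end Stackelberg

end

theorem stmt_9_general (lam mu q R : ℝ) (hlam : 0 < lam) (hmu : 0 < mu)
    (hcmin : 0 < q * mu / (1 - q) - lam)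
    (hR : R > q * mu / (1 - q) - lam) :
    let cmin := q * mu / (1 - q) - lam
    let J : ℝ → ℝ → ℝ := fun s c =>
      lam * s * (c + lam + mu) / ((mu + lam) * (mu * c + lam * s + c * s))
    ∀ s c : ℝ, 0 ≤ s → cmin ≤ c → s + c ≤ R →
      J s c ≤ J (R - cmin) cmin ∧
      (J s c = J (R - cmin) cmin → s = R - cmin ∧ c = cmin) := by
  intro cmin J s c hs hc hsc
  exact Stackelberg.senderUtility_isMax_corner hlam hmu hcmin hR hs hc hsc

theorem stmt_9 (lam mu q R : ℝ) (hlam : 0 < lam) (hmu : 0 < mu)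
    (hq0 : 0 < q) (hq1 : q < 1)
    (hcmin : 0 < q * mu / (1 - q) - lam)
    (hR : R > q * mu / (1 - q) - lam) :
    let cmin := q * mu / (1 - q) - lam
    let J : ℝ → ℝ → ℝ := fun s c =>
      lam * s * (c + lam + mu) / ((mu + lam) * (mu * c + lam * s + c * s))
    ∀ s c : ℝ, 0 ≤ s → cmin ≤ c → s + c ≤ R →
      J s c ≤ J (R - cmin) cmin ∧
      (J s c = J (R - cmin) cmin → s = R - cmin ∧ c = cmin) :=
  stmt_9_general lam mu q R hlam hmu hcmin hR
end
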